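/- arXiv:2509.25553 — 4 statements merged into one kernel-verified Lean document; each statement's English description precedes it below -/
import Mathlib

section
/- Let c > 0, let λ : ℝ → ℝ be continuously differentiable with λ(u) > 0 for u > 0, and let x be twice continuously differentiable on an open neighborhood of the closed domain Ω̄_c = {(s,t) ∈ ℝ² : s ≥ 0, t ≥ 0, s+t ≥ c}, satisfying 2λ(s+t)·x_st + λ'(s+t)·(x_s + x_t) = 0 there. Define n(σ) = x_s(σ, c−σ) + x_t(σ, c−σ) for σ ∈ [0,c]. Then for every point (s,t) with 0 < s < c, 0 < t < c, and s + t > c, one has ∫_{c−t}^{s} λ(σ+t)·x_s(σ,t) dσ + ∫_{c−s}^{t} λ(s+τ)·x_t(s,τ) dτ = λ(c)·∫_{c−t}^{s} n(σ) dσ. -/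
/-!
By the hodograph equation and the symmetry `x_st = x_ts`, the form
`α = λ(σ + τ) (x_s dσ - x_t dτ)` is closed: `∂_τ (λ x_s) = -∂_σ (λ x_t)`. Green's theorem on the
triangle with vertices `(s, t)`, `(s, c - s)`, `(c - t, t)` follows by integrating this common
derivative once first in `τ` and once first in `σ` (fundamental theorem of calculus on each
segment) and equating the two iterated integrals by Fubini. On the hypotenuse `σ + τ = c` the
weight is the constant `λ(c)`, and the substitution `τ = c - σ` merges the two hypotenuse
integrals into `λ(c) ∫ n`.
-/

open MeasureTheory Set intervalIntegral Function

noncomputable def pd1 (f : ℝ → ℝ → ℝ) (s t : ℝ) : ℝ := deriv (fun s' => f s' t) s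

noncomputable def pd2 (f : ℝ → ℝ → ℝ) (s t : ℝ) : ℝ := deriv (fun t' => f s t') t

/-- The closed triangle with vertices `(s, t)`, `(s, c - s)`, `(c - t, t)` (empty unless
`c ≤ s + t`). -/
def triangle (c s t : ℝ) : Set (ℝ × ℝ) := {p | p.1 ≤ s ∧ p.2 ≤ t ∧ c ≤ p.1 + p.2}

section Triangle

variable {c s t : ℝ}

theorem mem_triangle_iff_fst {p : ℝ × ℝ} :
    p ∈ triangle c s t ↔ p.1 ∈ Icc (c - t) s ∧ p.2 ∈ Icc (c - p.1) t := by
  simp only [triangle, mem_ofPred_eq, mem_Icc]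
  constructor
  · rintro ⟨h1, h2, h3⟩
    exact ⟨⟨by linarith, h1⟩, by linarith, h2⟩
  · rintro ⟨⟨-, h1⟩, h2, h3⟩
    exact ⟨h1, h3, by linarith⟩

theorem mem_triangle_iff_snd {p : ℝ × ℝ} :
    p ∈ triangle c s t ↔ p.2 ∈ Icc (c - s) t ∧ p.1 ∈ Icc (c - p.2) s := by
  simp only [triangle, mem_ofPred_eq, mem_Icc]
  constructor
  · rintro ⟨h1, h2, h3⟩
    exact ⟨⟨by linarith, h2⟩, by linarith, h1⟩
  · rintro ⟨⟨-, h1⟩, h2, h3⟩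
    exact ⟨h3, h1, by linarith⟩

theorem preimage_swap_triangle : Prod.swap ⁻¹' triangle c s t = triangle c t s := by
  ext p
  simp only [triangle, mem_preimage, mem_ofPred_eq, Prod.fst_swap, Prod.snd_swap, add_comm p.2]
  tauto

theorem isCompact_triangle : IsCompact (triangle c s t) := by
  refine (isCompact_Icc (a := (c - t, c - s)) (b := (s, t))).of_isClosed_subset ?_ ?_
  · exact (isClosed_le continuous_fst continuous_const).inter
      ((isClosed_le continuous_snd continuous_const).inter
        (isClosed_le continuous_const (continuous_fst.add continuous_snd)))
  · intro p hp
    obtain ⟨h1, h2, h3⟩ := hp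
    exact ⟨⟨by simp only; linarith, by simp only; linarith⟩, ⟨h1, h2⟩⟩

theorem measurableSet_triangle : MeasurableSet (triangle c s t) :=
  isCompact_triangle.isClosed.measurableSet

theorem integral_indicator_triangle_slice (G : ℝ × ℝ → ℝ) (σ : ℝ) :
    ∫ τ, (triangle c s t).indicator G (σ, τ)
      = (Icc (c - t) s).indicator (fun σ => ∫ τ in (c - σ)..t, G (σ, τ)) σ := by
  by_cases hσ : σ ∈ Icc (c - t) s
  · have hslice : (fun τ => (triangle c s t).indicator G (σ, τ))
        = (Icc (c - σ) t).indicator (fun τ => G (σ, τ)) := by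
      classical
      ext τ
      rw [indicator_apply, indicator_apply]
      simp only [mem_triangle_iff_fst, hσ, true_and]
    rw [indicator_of_mem hσ, hslice, MeasureTheory.integral_indicator measurableSet_Icc,
      integral_Icc_eq_integral_Ioc, integral_of_le (by linarith [hσ.1])]
  · rw [indicator_of_notMem hσ, ← integral_zero ℝ ℝ]
    congr 1 with τ
    exact indicator_of_notMem (fun hp => hσ (mem_triangle_iff_fst.1 hp).1) _

theorem integral_integral_indicator_triangle (hst : c ≤ s + t) (G : ℝ × ℝ → ℝ) :
    ∫ σ, ∫ τ, (triangle c s t).indicator G (σ, τ)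
      = ∫ σ in (c - t)..s, ∫ τ in (c - σ)..t, G (σ, τ) := by
  simp_rw [integral_indicator_triangle_slice]
  rw [MeasureTheory.integral_indicator measurableSet_Icc, integral_Icc_eq_integral_Ioc,
    integral_of_le (by linarith)]

theorem integral_integral_triangle_swap (hst : c ≤ s + t) {G : ℝ × ℝ → ℝ}
    (hG : IntegrableOn G (triangle c s t)) :
    ∫ σ in (c - t)..s, ∫ τ in (c - σ)..t, G (σ, τ)
      = ∫ τ in (c - s)..t, ∫ σ in (c - τ)..s, G (σ, τ) := by
  have hint : Integrable (uncurry fun σ τ => (triangle c s t).indicator G (σ, τ))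
      (volume.prod volume) := by
    rw [← Measure.volume_eq_prod]
    exact hG.integrable_indicator measurableSet_triangle
  have hswapped := integral_integral_indicator_triangle (c := c) (s := t) (t := s) (by linarith)
    (G ∘ Prod.swap)
  rw [← preimage_swap_triangle] at hswapped
  simp only [indicator_comp_right, comp_apply, Prod.swap_prod_mk] at hswapped
  rw [← hswapped, ← integral_integral_indicator_triangle hst, integral_integral_swap hint]

end Triangle

theorem integral_add_integral_eq_of_closed_form_triangle {c s t : ℝ} (hst : c ≤ s + t)
    {F H G : ℝ × ℝ → ℝ} (hF : ContinuousOn F (triangle c s t))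
    (hH : ContinuousOn H (triangle c s t)) (hG : ContinuousOn G (triangle c s t))
    (hFτ : ∀ p ∈ triangle c s t, HasDerivAt (fun τ => F (p.1, τ)) (G p) p.2)
    (hHσ : ∀ p ∈ triangle c s t, HasDerivAt (fun σ => H (σ, p.2)) (-G p) p.1) :
    (∫ σ in (c - t)..s, F (σ, t)) + (∫ τ in (c - s)..t, H (s, τ))
      = ∫ σ in (c - t)..s, (F (σ, c - σ) + H (σ, c - σ)) := by
  have hvert : ∀ σ ∈ uIcc (c - t) s, ∀ τ ∈ uIcc (c - σ) t, (σ, τ) ∈ triangle c s t := by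
    intro σ hσ τ hτ
    rw [uIcc_of_le (by linarith)] at hσ
    rw [uIcc_of_le (by linarith [hσ.1])] at hτ
    exact mem_triangle_iff_fst.2 ⟨hσ, hτ⟩
  have hhor : ∀ τ ∈ uIcc (c - s) t, ∀ σ ∈ uIcc (c - τ) s, (σ, τ) ∈ triangle c s t := by
    intro τ hτ σ hσ
    rw [uIcc_of_le (by linarith)] at hτ
    rw [uIcc_of_le (by linarith [hτ.1])] at hσ
    exact mem_triangle_iff_snd.2 ⟨hτ, hσ⟩
  have hdiag : ∀ σ ∈ uIcc (c - t) s, (σ, c - σ) ∈ triangle c s t := fun σ hσ =>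
    hvert σ hσ (c - σ) left_mem_uIcc
  have hFTCτ : ∀ σ ∈ uIcc (c - t) s,
      ∫ τ in (c - σ)..t, G (σ, τ) = F (σ, t) - F (σ, c - σ) := fun σ hσ =>
    integral_eq_sub_of_hasDerivAt (f := fun τ => F (σ, τ)) (fun τ hτ => hFτ _ (hvert σ hσ τ hτ))
      ((hG.comp (by fun_prop) (hvert σ hσ)).intervalIntegrable)
  have hFTCσ : ∀ τ ∈ uIcc (c - s) t,
      ∫ σ in (c - τ)..s, G (σ, τ) = H (c - τ, τ) - H (s, τ) := by
    intro τ hτ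
    have hFTC := integral_eq_sub_of_hasDerivAt (f := fun σ => H (σ, τ))
      (fun σ hσ => hHσ _ (hhor τ hτ σ hσ))
      ((hG.comp (by fun_prop) (hhor τ hτ)).intervalIntegrable.neg)
    rw [intervalIntegral.integral_neg] at hFTC
    linarith
  have hFtop : IntervalIntegrable (fun σ => F (σ, t)) volume (c - t) s :=
    (hF.comp (by fun_prop) fun σ hσ => hvert σ hσ t right_mem_uIcc).intervalIntegrable
  have hFdiag : IntervalIntegrable (fun σ => F (σ, c - σ)) volume (c - t) s :=
    (hF.comp (by fun_prop) hdiag).intervalIntegrable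
  have hHright : IntervalIntegrable (fun τ => H (s, τ)) volume (c - s) t :=
    (hH.comp (by fun_prop) fun τ hτ => hhor τ hτ s right_mem_uIcc).intervalIntegrable
  have hHdiag : IntervalIntegrable (fun τ => H (c - τ, τ)) volume (c - s) t :=
    (hH.comp (by fun_prop) fun τ hτ => hhor τ hτ (c - τ) left_mem_uIcc).intervalIntegrable
  have hHdiag' : IntervalIntegrable (fun σ => H (σ, c - σ)) volume (c - t) s :=
    (hH.comp (by fun_prop) hdiag).intervalIntegrable
  have hfubini := integral_integral_triangle_swap hst (hG.integrableOn_compact isCompact_triangle)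
  rw [integral_congr hFTCτ, integral_congr hFTCσ, integral_sub hFtop hFdiag,
    integral_sub hHdiag hHright] at hfubini
  have hsubst : ∫ τ in (c - s)..t, H (c - τ, τ) = ∫ σ in (c - t)..s, H (σ, c - σ) := by
    simpa only [sub_sub_cancel] using
      integral_comp_sub_left (a := c - s) (b := t) (fun σ => H (σ, c - σ)) c
  rw [integral_add hFdiag hHdiag', ← hsubst]
  linarith

theorem ContDiffOn.differentiableAt_of_isOpen {E F : Type*} [NormedAddCommGroup E]
    [NormedSpace ℝ E] [NormedAddCommGroup F] [NormedSpace ℝ F] {n : WithTop ℕ∞} {g : E → F}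
    {U : Set E} (hg : ContDiffOn ℝ n g U) (hn : n ≠ 0) (hU : IsOpen U) {p : E} (hp : p ∈ U) :
    DifferentiableAt ℝ g p :=
  (hg.differentiableOn hn p hp).differentiableAt (hU.mem_nhds hp)

section PartialDerivatives

variable {f : ℝ → ℝ → ℝ} {V : Set (ℝ × ℝ)} {a b : ℝ}

theorem DifferentiableAt.hasDerivAt_fderiv_apply_fst
    (hf : DifferentiableAt ℝ (uncurry f) (a, b)) :
    HasDerivAt (fun σ => f σ b) (fderiv ℝ (uncurry f) (a, b) (1, 0)) a :=
  (hf.hasFDerivAt.comp_hasDerivAt a ((hasDerivAt_id a).prodMk (hasDerivAt_const a b)) :)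

theorem DifferentiableAt.hasDerivAt_fderiv_apply_snd
    (hf : DifferentiableAt ℝ (uncurry f) (a, b)) :
    HasDerivAt (fun τ => f a τ) (fderiv ℝ (uncurry f) (a, b) (0, 1)) b :=
  (hf.hasFDerivAt.comp_hasDerivAt b ((hasDerivAt_const b a).prodMk (hasDerivAt_id b)) :)

theorem DifferentiableAt.pd1_eq_fderiv (hf : DifferentiableAt ℝ (uncurry f) (a, b)) :
    pd1 f a b = fderiv ℝ (uncurry f) (a, b) (1, 0) :=
  hf.hasDerivAt_fderiv_apply_fst.deriv

theorem DifferentiableAt.pd2_eq_fderiv (hf : DifferentiableAt ℝ (uncurry f) (a, b)) :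
    pd2 f a b = fderiv ℝ (uncurry f) (a, b) (0, 1) :=
  hf.hasDerivAt_fderiv_apply_snd.deriv

theorem DifferentiableAt.hasDerivAt_pd1 (hf : DifferentiableAt ℝ (uncurry f) (a, b)) :
    HasDerivAt (fun σ => f σ b) (pd1 f a b) a :=
  hf.pd1_eq_fderiv ▸ hf.hasDerivAt_fderiv_apply_fst

theorem DifferentiableAt.hasDerivAt_pd2 (hf : DifferentiableAt ℝ (uncurry f) (a, b)) :
    HasDerivAt (fun τ => f a τ) (pd2 f a b) b :=
  hf.pd2_eq_fderiv ▸ hf.hasDerivAt_fderiv_apply_snd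

theorem ContDiffOn.eventuallyEq_pd1 {n : WithTop ℕ∞} (hf : ContDiffOn ℝ n (uncurry f) V)
    (hn : n ≠ 0) (hV : IsOpen V) {p : ℝ × ℝ} (hp : p ∈ V) :
    uncurry (pd1 f) =ᶠ[nhds p] fun q => fderiv ℝ (uncurry f) q (1, 0) := by
  filter_upwards [hV.mem_nhds hp] with q hq
  exact (hf.differentiableAt_of_isOpen hn hV hq).pd1_eq_fderiv

theorem ContDiffOn.eventuallyEq_pd2 {n : WithTop ℕ∞} (hf : ContDiffOn ℝ n (uncurry f) V)
    (hn : n ≠ 0) (hV : IsOpen V) {p : ℝ × ℝ} (hp : p ∈ V) :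
    uncurry (pd2 f) =ᶠ[nhds p] fun q => fderiv ℝ (uncurry f) q (0, 1) := by
  filter_upwards [hV.mem_nhds hp] with q hq
  exact (hf.differentiableAt_of_isOpen hn hV hq).pd2_eq_fderiv

theorem ContDiffOn.pd1_of_isOpen {n : WithTop ℕ∞} (hf : ContDiffOn ℝ (n + 1) (uncurry f) V)
    (hV : IsOpen V) : ContDiffOn ℝ n (uncurry (pd1 f)) V :=
  ((hf.fderiv_of_isOpen hV le_rfl).clm_apply contDiffOn_const).congr fun _ hp =>
    (hf.eventuallyEq_pd1 (by simp) hV hp).eq_of_nhds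

theorem ContDiffOn.pd2_of_isOpen {n : WithTop ℕ∞} (hf : ContDiffOn ℝ (n + 1) (uncurry f) V)
    (hV : IsOpen V) : ContDiffOn ℝ n (uncurry (pd2 f)) V :=
  ((hf.fderiv_of_isOpen hV le_rfl).clm_apply contDiffOn_const).congr fun _ hp =>
    (hf.eventuallyEq_pd2 (by simp) hV hp).eq_of_nhds

theorem ContDiffOn.pd2_pd1_eq_pd1_pd2 (hf : ContDiffOn ℝ 2 (uncurry f) V) (hV : IsOpen V)
    (hp : (a, b) ∈ V) : pd2 (pd1 f) a b = pd1 (pd2 f) a b := by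
  have hD : DifferentiableAt ℝ (fderiv ℝ (uncurry f)) (a, b) :=
    (hf.fderiv_of_isOpen hV (m := 1) le_rfl).differentiableAt_of_isOpen one_ne_zero hV hp
  rw [((hf.pd1_of_isOpen (n := 1) hV).differentiableAt_of_isOpen one_ne_zero hV hp).pd2_eq_fderiv,
    ((hf.pd2_of_isOpen (n := 1) hV).differentiableAt_of_isOpen one_ne_zero hV hp).pd1_eq_fderiv,
    (hf.eventuallyEq_pd1 two_ne_zero hV hp).fderiv_eq,
    (hf.eventuallyEq_pd2 two_ne_zero hV hp).fderiv_eq,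
    fderiv_clm_apply hD (differentiableAt_const _), fderiv_clm_apply hD (differentiableAt_const _)]
  simpa using ((hf.contDiffAt (hV.mem_nhds hp)).isSymmSndFDerivAt (by simp)) (0, 1) (1, 0)

end PartialDerivatives

section WeightedPartialDerivatives

variable {lam : ℝ → ℝ} {g : ℝ → ℝ → ℝ} {a b : ℝ}

theorem hasDerivAt_weight_mul_pd1_fst (hlam : DifferentiableAt ℝ lam (a + b))
    (hg : DifferentiableAt ℝ (uncurry g) (a, b)) :
    HasDerivAt (fun σ => lam (σ + b) * g σ b)
      (deriv lam (a + b) * g a b + lam (a + b) * pd1 g a b) a :=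
  (hlam.hasDerivAt.comp_add_const a b).mul hg.hasDerivAt_pd1

theorem hasDerivAt_weight_mul_pd2_snd (hlam : DifferentiableAt ℝ lam (a + b))
    (hg : DifferentiableAt ℝ (uncurry g) (a, b)) :
    HasDerivAt (fun τ => lam (a + τ) * g a τ)
      (deriv lam (a + b) * g a b + lam (a + b) * pd2 g a b) b :=
  (hlam.hasDerivAt.comp_const_add a b).mul hg.hasDerivAt_pd2

end WeightedPartialDerivatives

theorem contour_identity_case_IV_general
    (c : ℝ) (lam : ℝ → ℝ) (hlam : ContDiff ℝ 1 lam)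
    (x : ℝ → ℝ → ℝ) (V : Set (ℝ × ℝ)) (hV : IsOpen V)
    (hΩV : {p : ℝ × ℝ | 0 ≤ p.1 ∧ 0 ≤ p.2 ∧ c ≤ p.1 + p.2} ⊆ V)
    (hx : ContDiffOn ℝ 2 (fun p : ℝ × ℝ => x p.1 p.2) V)
    (hpde : ∀ p ∈ V,
      2 * lam (p.1 + p.2) * pd2 (pd1 x) p.1 p.2
        + deriv lam (p.1 + p.2) * (pd1 x p.1 p.2 + pd2 x p.1 p.2) = 0) :
    ∀ s t : ℝ, 0 < s → s < c → 0 < t → t < c → c < s + t →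
      (∫ σ in (c - t)..s, lam (σ + t) * pd1 x σ t)
        + (∫ τ in (c - s)..t, lam (s + τ) * pd2 x s τ)
      = lam c * ∫ σ in (c - t)..s, (pd1 x σ (c - σ) + pd2 x σ (c - σ)) := by
  intro s t _ hsc _ htc hst
  have hK : triangle c s t ⊆ V := fun p ⟨hps, hpt, hpc⟩ =>
    hΩV ⟨by linarith, by linarith, hpc⟩
  have hlamd : Differentiable ℝ lam := hlam.differentiable one_ne_zero
  have hx1 := hx.pd1_of_isOpen (n := 1) hV
  have hx2 := hx.pd2_of_isOpen (n := 1) hV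
  have hx12 := hx1.pd2_of_isOpen (n := 0) hV
  have hweight : Continuous fun p : ℝ × ℝ => lam (p.1 + p.2) := by fun_prop
  refine (integral_add_integral_eq_of_closed_form_triangle hst.le
    (F := fun p => lam (p.1 + p.2) * pd1 x p.1 p.2)
    (H := fun p => lam (p.1 + p.2) * pd2 x p.1 p.2)
    (G := fun p => deriv lam (p.1 + p.2) * pd1 x p.1 p.2 + lam (p.1 + p.2) * pd2 (pd1 x) p.1 p.2)
    (hweight.continuousOn.mul (hx1.continuousOn.mono hK))
    (hweight.continuousOn.mul (hx2.continuousOn.mono hK))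
    ((((hlam.continuous_deriv le_rfl).comp (by fun_prop)).continuousOn.mul
      (hx1.continuousOn.mono hK)).add (hweight.continuousOn.mul (hx12.continuousOn.mono hK)))
    (fun p hp => hasDerivAt_weight_mul_pd2_snd (hlamd _)
      (hx1.differentiableAt_of_isOpen one_ne_zero hV (hK hp)))
    (fun p hp => (hasDerivAt_weight_mul_pd1_fst (hlamd _)
      (hx2.differentiableAt_of_isOpen one_ne_zero hV (hK hp))).congr_deriv (by
        rw [← hx.pd2_pd1_eq_pd1_pd2 hV (hK hp)]
        linear_combination hpde p (hK hp)))).trans ?_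
  rw [← intervalIntegral.integral_const_mul]
  refine integral_congr fun σ _ => ?_
  simp only [add_sub_cancel]
  ring

/-- For a classical solution `x` of the linear hodograph equation on a
neighborhood of `Ω̄_c = {s ≥ 0, t ≥ 0, s+t ≥ c}` (with `λ` continuously differentiable
and positive on `(0,∞)`), at any point with `0 < s < c`, `0 < t < c`, `s+t > c`,
`∫_{c−t}^{s} λ(σ+t)·x_s(σ,t) dσ + ∫_{c−s}^{t} λ(s+τ)·x_t(s,τ) dτ
  = λ(c)·∫_{c−t}^{s} n(σ) dσ`,
where `n(σ) = x_s(σ, c−σ) + x_t(σ, c−σ)` is the normal derivative on the Cauchy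
boundary. -/
theorem contour_identity_case_IV
    (c : ℝ) (hc : 0 < c) (lam : ℝ → ℝ) (hlam : ContDiff ℝ 1 lam)
    (hpos : ∀ u : ℝ, 0 < u → 0 < lam u)
    (x : ℝ → ℝ → ℝ) (V : Set (ℝ × ℝ)) (hV : IsOpen V)
    (hΩV : {p : ℝ × ℝ | 0 ≤ p.1 ∧ 0 ≤ p.2 ∧ c ≤ p.1 + p.2} ⊆ V)
    (hx : ContDiffOn ℝ 2 (fun p : ℝ × ℝ => x p.1 p.2) V)
    (hpde : ∀ p ∈ V,
      2 * lam (p.1 + p.2) * pd2 (pd1 x) p.1 p.2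
        + deriv lam (p.1 + p.2) * (pd1 x p.1 p.2 + pd2 x p.1 p.2) = 0) :
    ∀ s t : ℝ, 0 < s → s < c → 0 < t → t < c → c < s + t →
      (∫ σ in (c - t)..s, lam (σ + t) * pd1 x σ t)
        + (∫ τ in (c - s)..t, lam (s + τ) * pd2 x s τ)
      = lam c * ∫ σ in (c - t)..s, (pd1 x σ (c - σ) + pd2 x σ (c - σ)) :=
  contour_identity_case_IV_general c lam hlam x V hV hΩV hx hpde
end

section
/- Let c > 0, let λ : ℝ → ℝ be continuously differentiable with λ(u) > 0 for u > 0, and let x be twice continuously differentiable on an open neighborhood of the closed domain Ω̄_c = {(s,t) ∈ ℝ² : s ≥ 0, t ≥ 0, s+t ≥ c}, satisfying 2λ(s+t)·x_st + λ'(s+t)·(x_s + x_t) = 0 there. Then for every (s,t) ∈ Ω̄_c, writing ξ⁺ = max(ξ,0), the following unified Volterra-type integral identity holds: 2λ(s+t)·x(s,t) = ∫_{(c−t)⁺}^{s} λ'(σ+t)·x(σ,t) dσ + ∫_{(c−s)⁺}^{t} λ'(s+τ)·x(s,τ) dτ + λ(max(c,t))·x((c−t)⁺, t) + λ(max(s,c))·x(s,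 (c−s)⁺) + ∫_{(c−t)⁺}^{min(c,s)} λ(c)·(x_s + x_t)(σ, c−σ) dσ + ∫_{min(c,s)}^{s} λ(σ + (c−s)⁺)·x_s(σ, (c−s)⁺) dσ + ∫_{min(c,t)}^{t} λ((c−t)⁺ + τ)·x_t((c−t)⁺, τ) dτ. -/
/-!
Write `P = λ(s+t) x_s` and `Q = λ(s+t) x_t`. By symmetry of the mixed partials the equation says
exactly `∂_t P + ∂_s Q = 0`. Integrating `∂_s (λ x)` along the horizontal characteristic through
`(s, t)` and `∂_t (λ x)` along the vertical one expresses `2 λ x` through boundary values, the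
`λ' x` integrals, and the line integrals `∫ P dσ + ∫ Q dτ` along these two characteristics.
Integrating `∂_t P = -∂_s Q` over the domain of dependence of `(s, t)` in `Ω̄_c`, fibre by fibre in
both orders (Fubini), moves those line integrals to the lower boundary of that domain: a piece of
the Cauchy line `s + t = c` and pieces of the Goursat lines `t = 0`, `s = 0`.
-/

open MeasureTheory Set Function

section PartialDerivatives

variable {f : ℝ → ℝ → ℝ} {V : Set (ℝ × ℝ)} {p : ℝ × ℝ}

theorem DifferentiableAt.hasDerivAt_fst
    (h : DifferentiableAt ℝ (fun q : ℝ × ℝ => f q.1 q.2) p) :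
    HasDerivAt (fun σ => f σ p.2) (fderiv ℝ (fun q : ℝ × ℝ => f q.1 q.2) p (1, 0)) p.1 :=
  h.hasFDerivAt.comp_hasDerivAt (f := fun σ => (σ, p.2)) p.1
    ((hasDerivAt_id p.1).prodMk (hasDerivAt_const p.1 p.2))

theorem DifferentiableAt.hasDerivAt_snd
    (h : DifferentiableAt ℝ (fun q : ℝ × ℝ => f q.1 q.2) p) :
    HasDerivAt (fun τ => f p.1 τ) (fderiv ℝ (fun q : ℝ × ℝ => f q.1 q.2) p (0, 1)) p.2 :=
  h.hasFDerivAt.comp_hasDerivAt (f := fun τ => (p.1, τ)) p.2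
    ((hasDerivAt_const p.2 p.1).prodMk (hasDerivAt_id p.2))

theorem pd1_eq_fderiv (h : DifferentiableAt ℝ (fun q : ℝ × ℝ => f q.1 q.2) p) :
    pd1 f p.1 p.2 = fderiv ℝ (fun q : ℝ × ℝ => f q.1 q.2) p (1, 0) :=
  h.hasDerivAt_fst.deriv

theorem pd2_eq_fderiv (h : DifferentiableAt ℝ (fun q : ℝ × ℝ => f q.1 q.2) p) :
    pd2 f p.1 p.2 = fderiv ℝ (fun q : ℝ × ℝ => f q.1 q.2) p (0, 1) :=
  h.hasDerivAt_snd.deriv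

theorem hasDerivAt_pd1 (h : DifferentiableAt ℝ (fun q : ℝ × ℝ => f q.1 q.2) p) :
    HasDerivAt (fun σ => f σ p.2) (pd1 f p.1 p.2) p.1 :=
  pd1_eq_fderiv h ▸ h.hasDerivAt_fst

theorem hasDerivAt_pd2 (h : DifferentiableAt ℝ (fun q : ℝ × ℝ => f q.1 q.2) p) :
    HasDerivAt (fun τ => f p.1 τ) (pd2 f p.1 p.2) p.2 :=
  pd2_eq_fderiv h ▸ h.hasDerivAt_snd

theorem ContDiffOn.differentiableAt_of_isOpen_s6 {n : WithTop ℕ∞}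
    (hf : ContDiffOn ℝ n (fun q : ℝ × ℝ => f q.1 q.2) V) (hV : IsOpen V) (hn : n ≠ 0)
    (hp : p ∈ V) : DifferentiableAt ℝ (fun q : ℝ × ℝ => f q.1 q.2) p :=
  (hf.differentiableOn hn).differentiableAt (hV.mem_nhds hp)

theorem ContDiffOn.pd1 {m n : WithTop ℕ∞} (hf : ContDiffOn ℝ n (fun q : ℝ × ℝ => f q.1 q.2) V)
    (hV : IsOpen V) (hmn : m + 1 ≤ n) : ContDiffOn ℝ m (fun q : ℝ × ℝ => pd1 f q.1 q.2) V :=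
  ((hf.fderiv_of_isOpen hV hmn).clm_apply contDiffOn_const).congr fun _ hq =>
    pd1_eq_fderiv <|
      hf.differentiableAt_of_isOpen_s6 hV (one_pos.trans_le (le_add_self.trans hmn)).ne' hq

theorem ContDiffOn.pd2 {m n : WithTop ℕ∞} (hf : ContDiffOn ℝ n (fun q : ℝ × ℝ => f q.1 q.2) V)
    (hV : IsOpen V) (hmn : m + 1 ≤ n) : ContDiffOn ℝ m (fun q : ℝ × ℝ => pd2 f q.1 q.2) V :=
  ((hf.fderiv_of_isOpen hV hmn).clm_apply contDiffOn_const).congr fun _ hq =>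
    pd2_eq_fderiv <|
      hf.differentiableAt_of_isOpen_s6 hV (one_pos.trans_le (le_add_self.trans hmn)).ne' hq

theorem pd1_pd2_eq_pd2_pd1 (hf : ContDiffOn ℝ 2 (fun q : ℝ × ℝ => f q.1 q.2) V) (hV : IsOpen V)
    (hp : p ∈ V) : pd1 (pd2 f) p.1 p.2 = pd2 (pd1 f) p.1 p.2 := by
  set X := fun q : ℝ × ℝ => f q.1 q.2
  have hD : DifferentiableAt ℝ (fderiv ℝ X) p :=
    ((hf.fderiv_of_isOpen hV (m := 1) (by norm_num)).differentiableOn one_ne_zero).differentiableAt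
      (hV.mem_nhds hp)
  have hsecond : ∀ (g : ℝ × ℝ → ℝ) (u v : ℝ × ℝ), g =ᶠ[nhds p] (fun q => fderiv ℝ X q u) →
      fderiv ℝ g p v = fderiv ℝ (fderiv ℝ X) p v u := by
    intro g u v hg
    rw [hg.fderiv_eq, fderiv_clm_apply hD (differentiableAt_const u)]
    simp
  have hX : ∀ q ∈ V, DifferentiableAt ℝ X q := fun q hq =>
    hf.differentiableAt_of_isOpen_s6 hV two_ne_zero hq
  rw [pd1_eq_fderiv ((hf.pd2 hV (m := 1) le_rfl).differentiableAt_of_isOpen_s6 hV one_ne_zero hp),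
    pd2_eq_fderiv ((hf.pd1 hV (m := 1) le_rfl).differentiableAt_of_isOpen_s6 hV one_ne_zero hp),
    hsecond _ (0, 1) (1, 0), hsecond _ (1, 0) (0, 1),
    (hf.contDiffAt (hV.mem_nhds hp)).isSymmSndFDerivAt (by simp)]
  · filter_upwards [hV.mem_nhds hp] with q hq using pd1_eq_fderiv (hX q hq)
  · filter_upwards [hV.mem_nhds hp] with q hq using pd2_eq_fderiv (hX q hq)

end PartialDerivatives

section Fubini

variable {α β E : Type*} [MeasurableSpace α] [MeasurableSpace β] [NormedAddCommGroup E]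
  [NormedSpace ℝ E] {μ : Measure α} {ν : Measure β}

theorem integral_integral_indicator_eq_setIntegral_setIntegral {R : Set (α × β)} {A : Set α}
    {B : α → Set β} {F : α → β → E} (hR : MeasurableSet R) (hA : MeasurableSet A)
    (hRAB : ∀ a b, (a, b) ∈ R ↔ a ∈ A ∧ b ∈ B a) :
    ∫ a, ∫ b, R.indicator (uncurry F) (a, b) ∂ν ∂μ = ∫ a in A, ∫ b in B a, F a b ∂ν ∂μ := by
  rw [← integral_indicator hA]
  congr 1
  ext a
  by_cases ha : a ∈ A
  · have hB : B a = Prod.mk a ⁻¹' R := by ext b; simp [hRAB, ha]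
    rw [indicator_of_mem ha, hB, ← integral_indicator (measurable_prodMk_left hR)]
    rfl
  · simp [indicator_of_notMem, hRAB, ha]

theorem setIntegral_setIntegral_swap [SFinite μ] [SFinite ν] {R : Set (α × β)} {A : Set α}
    {B : α → Set β} {C : Set β} {D : β → Set α} {F : α → β → E} (hR : MeasurableSet R)
    (hA : MeasurableSet A) (hC : MeasurableSet C) (hAB : ∀ a b, (a, b) ∈ R ↔ a ∈ A ∧ b ∈ B a)
    (hCD : ∀ a b, (a, b) ∈ R ↔ b ∈ C ∧ a ∈ D b) (hF : IntegrableOn (uncurry F) R (μ.prod ν)) :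
    ∫ a in A, ∫ b in B a, F a b ∂ν ∂μ = ∫ b in C, ∫ a in D b, F a b ∂μ ∂ν := by
  calc ∫ a in A, ∫ b in B a, F a b ∂ν ∂μ
      = ∫ a, ∫ b, R.indicator (uncurry F) (a, b) ∂ν ∂μ :=
        (integral_integral_indicator_eq_setIntegral_setIntegral hR hA hAB).symm
    _ = ∫ b, ∫ a, R.indicator (uncurry F) (a, b) ∂μ ∂ν :=
        integral_integral_swap ((integrable_indicator_iff hR).2 hF)
    _ = ∫ b in C, ∫ a in D b, F a b ∂μ ∂ν :=
        integral_integral_indicator_eq_setIntegral_setIntegral (R := Prod.swap ⁻¹' R)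
          (F := fun b a => F a b) (hR.preimage measurable_swap) hC fun b a => hCD a b

end Fubini

theorem ContinuousOn.intervalIntegrable_of_mapsTo {F : ℝ → ℝ → ℝ} {S : Set (ℝ × ℝ)}
    (hF : ContinuousOn (fun p : ℝ × ℝ => F p.1 p.2) S) {γ₁ γ₂ : ℝ → ℝ} (h₁ : Continuous γ₁)
    (h₂ : Continuous γ₂) {a b : ℝ} (hγ : ∀ r ∈ uIcc a b, (γ₁ r, γ₂ r) ∈ S) :
    IntervalIntegrable (fun r => F (γ₁ r) (γ₂ r)) volume a b :=
  (hF.comp (h₁.prodMk h₂).continuousOn hγ).intervalIntegrable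

def dependenceDomain (c s t : ℝ) : Set (ℝ × ℝ) :=
  {p | 0 ≤ p.1 ∧ 0 ≤ p.2 ∧ c ≤ p.1 + p.2 ∧ p.1 ≤ s ∧ p.2 ≤ t}

section DependenceDomain

variable {c s t : ℝ}

@[simp]
theorem mem_dependenceDomain {p : ℝ × ℝ} :
    p ∈ dependenceDomain c s t ↔ 0 ≤ p.1 ∧ 0 ≤ p.2 ∧ c ≤ p.1 + p.2 ∧ p.1 ≤ s ∧ p.2 ≤ t :=
  Iff.rfl

theorem isCompact_dependenceDomain (c s t : ℝ) : IsCompact (dependenceDomain c s t) := by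
  refine (isCompact_Icc.prod (isCompact_Icc (a := (0 : ℝ)) (b := t))).of_isClosed_subset ?_
    fun p hp => ⟨⟨hp.1, hp.2.2.2.1⟩, hp.2.1, hp.2.2.2.2⟩
  exact (isClosed_le continuous_const continuous_fst).inter <|
    (isClosed_le continuous_const continuous_snd).inter <|
    (isClosed_le continuous_const (continuous_fst.add continuous_snd)).inter <|
    (isClosed_le continuous_fst continuous_const).inter
      (isClosed_le continuous_snd continuous_const)

theorem mk_mem_dependenceDomain_top (hs : 0 ≤ s) (ht : 0 ≤ t) (hst : c ≤ s + t) {σ : ℝ}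
    (hσ : σ ∈ uIcc (max (c - t) 0) s) : (σ, t) ∈ dependenceDomain c s t := by
  simp only [uIcc_of_le (max_le (by linarith : c - t ≤ s) hs), mem_Icc, max_le_iff] at hσ
  simp only [mem_dependenceDomain]
  refine ⟨?_, ?_, ?_, ?_, ?_⟩ <;> linarith

theorem mk_mem_dependenceDomain_right (hs : 0 ≤ s) (ht : 0 ≤ t) (hst : c ≤ s + t) {τ : ℝ}
    (hτ : τ ∈ uIcc (max (c - s) 0) t) : (s, τ) ∈ dependenceDomain c s t := by
  simp only [uIcc_of_le (max_le (by linarith : c - s ≤ t) ht), mem_Icc, max_le_iff] at hτ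
  simp only [mem_dependenceDomain]
  refine ⟨?_, ?_, ?_, ?_, ?_⟩ <;> linarith

theorem mk_mem_dependenceDomain_bottom (hs : 0 ≤ s) (ht : 0 ≤ t) (hst : c ≤ s + t) {σ : ℝ}
    (hσ : σ ∈ uIcc (max (c - t) 0) s) : (σ, max (c - σ) 0) ∈ dependenceDomain c s t := by
  simp only [uIcc_of_le (max_le (by linarith : c - t ≤ s) hs), mem_Icc, max_le_iff] at hσ
  simp only [mem_dependenceDomain, max_le_iff]
  refine ⟨?_, ?_, ?_, ?_, ?_, ?_⟩ <;> linarith [le_max_left (c - σ) 0, le_max_right (c - σ) 0]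

theorem mk_mem_dependenceDomain_left (hs : 0 ≤ s) (ht : 0 ≤ t) (hst : c ≤ s + t) {τ : ℝ}
    (hτ : τ ∈ uIcc (max (c - s) 0) t) : (max (c - τ) 0, τ) ∈ dependenceDomain c s t := by
  simp only [uIcc_of_le (max_le (by linarith : c - s ≤ t) ht), mem_Icc, max_le_iff] at hτ
  simp only [mem_dependenceDomain, max_le_iff]
  refine ⟨?_, ?_, ?_, ⟨?_, ?_⟩, ?_⟩ <;> linarith [le_max_left (c - τ) 0, le_max_right (c - τ) 0]

theorem setIntegral_setIntegral_swap_dependenceDomain {w : ℝ → ℝ → ℝ}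
    (hw : ContinuousOn (fun p : ℝ × ℝ => w p.1 p.2) (dependenceDomain c s t)) :
    ∫ σ in Ioc (max (c - t) 0) s, ∫ τ in Ioc (max (c - σ) 0) t, w σ τ =
      ∫ τ in Ioc (max (c - s) 0) t, ∫ σ in Ioc (max (c - τ) 0) s, w σ τ := by
  refine setIntegral_setIntegral_swap (R := Ioc 0 s ×ˢ Ioc 0 t ∩ {p | c < p.1 + p.2})
    ((measurableSet_Ioc.prod measurableSet_Ioc).inter
      (measurableSet_lt (by fun_prop) (by fun_prop)))
    measurableSet_Ioc measurableSet_Ioc ?_ ?_ ?_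
  · intro σ τ
    simp only [mem_inter_iff, mem_prod, mem_Ioc, mem_ofPred_eq, max_lt_iff]
    constructor <;> intro h <;> refine ⟨⟨?_, ?_⟩, ?_⟩ <;> grind
  · intro σ τ
    simp only [mem_inter_iff, mem_prod, mem_Ioc, mem_ofPred_eq, max_lt_iff]
    constructor <;> intro h <;> refine ⟨⟨?_, ?_⟩, ?_⟩ <;> grind
  · rw [← Measure.volume_eq_prod]
    refine (hw.integrableOn_compact (isCompact_dependenceDomain c s t)).mono_set ?_
    rintro p ⟨⟨⟨h1, h2⟩, h3, h4⟩, h5⟩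
    exact ⟨h1.le, h3.le, h5.le, h2, h4⟩

variable {P Q w : ℝ → ℝ → ℝ}

theorem integral_add_integral_eq_lowerBoundary (hs : 0 ≤ s) (ht : 0 ≤ t) (hst : c ≤ s + t)
    (hP : ContinuousOn (fun p : ℝ × ℝ => P p.1 p.2) (dependenceDomain c s t))
    (hQ : ContinuousOn (fun p : ℝ × ℝ => Q p.1 p.2) (dependenceDomain c s t))
    (hw : ContinuousOn (fun p : ℝ × ℝ => w p.1 p.2) (dependenceDomain c s t))
    (hPw : ∀ p ∈ dependenceDomain c s t, HasDerivAt (fun τ => P p.1 τ) (w p.1 p.2) p.2)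
    (hQw : ∀ p ∈ dependenceDomain c s t, HasDerivAt (fun σ => Q σ p.2) (-w p.1 p.2) p.1) :
    (∫ σ in (max (c - t) 0)..s, P σ t) + ∫ τ in (max (c - s) 0)..t, Q s τ =
      (∫ σ in (max (c - t) 0)..s, P σ (max (c - σ) 0))
        + ∫ τ in (max (c - s) 0)..t, Q (max (c - τ) 0) τ := by
  have hfib₁ : ∀ σ ∈ Ioc (max (c - t) 0) s,
      ∫ τ in Ioc (max (c - σ) 0) t, w σ τ = P σ t - P σ (max (c - σ) 0) := by
    intro σ hσ
    simp only [mem_Ioc, max_lt_iff] at hσ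
    have hlo : max (c - σ) 0 ≤ t := max_le (by linarith) ht
    have hmem : ∀ τ ∈ uIcc (max (c - σ) 0) t, (σ, τ) ∈ dependenceDomain c s t := by
      intro τ hτ
      simp only [uIcc_of_le hlo, mem_Icc, max_le_iff] at hτ
      simp only [mem_dependenceDomain]
      refine ⟨?_, ?_, ?_, ?_, ?_⟩ <;> linarith
    rw [← intervalIntegral.integral_of_le hlo]
    exact intervalIntegral.integral_eq_sub_of_hasDerivAt (fun τ hτ => hPw _ (hmem τ hτ))
      (hw.intervalIntegrable_of_mapsTo continuous_const continuous_id hmem)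
  have hfib₂ : ∀ τ ∈ Ioc (max (c - s) 0) t,
      ∫ σ in Ioc (max (c - τ) 0) s, w σ τ = Q (max (c - τ) 0) τ - Q s τ := by
    intro τ hτ
    simp only [mem_Ioc, max_lt_iff] at hτ
    have hlo : max (c - τ) 0 ≤ s := max_le (by linarith) hs
    have hmem : ∀ σ ∈ uIcc (max (c - τ) 0) s, (σ, τ) ∈ dependenceDomain c s t := by
      intro σ hσ
      simp only [uIcc_of_le hlo, mem_Icc, max_le_iff] at hσ
      simp only [mem_dependenceDomain]
      refine ⟨?_, ?_, ?_, ?_, ?_⟩ <;> linarith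
    have h := intervalIntegral.integral_eq_sub_of_hasDerivAt (f := fun σ => Q σ τ)
      (fun σ hσ => hQw _ (hmem σ hσ))
      (hw.intervalIntegrable_of_mapsTo continuous_id continuous_const hmem).neg
    rw [intervalIntegral.integral_neg] at h
    rw [← intervalIntegral.integral_of_le hlo]
    linarith
  have hswap := setIntegral_setIntegral_swap_dependenceDomain hw
  rw [setIntegral_congr_fun measurableSet_Ioc hfib₁, setIntegral_congr_fun measurableSet_Ioc hfib₂,
    ← intervalIntegral.integral_of_le (max_le (by linarith) hs),
    ← intervalIntegral.integral_of_le (max_le (by linarith) ht),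
    intervalIntegral.integral_sub
      (hP.intervalIntegrable_of_mapsTo (by fun_prop) (by fun_prop) fun _ =>
        mk_mem_dependenceDomain_top hs ht hst)
      (hP.intervalIntegrable_of_mapsTo (by fun_prop) (by fun_prop) fun _ =>
        mk_mem_dependenceDomain_bottom hs ht hst),
    intervalIntegral.integral_sub
      (hQ.intervalIntegrable_of_mapsTo (by fun_prop) (by fun_prop) fun _ =>
        mk_mem_dependenceDomain_left hs ht hst)
      (hQ.intervalIntegrable_of_mapsTo (by fun_prop) (by fun_prop) fun _ =>
        mk_mem_dependenceDomain_right hs ht hst)] at hswap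
  linarith

theorem integral_lowerBoundary_eq_cauchy_add_goursat (g : ℝ → ℝ → ℝ) (hc : 0 ≤ c) (hs : 0 ≤ s)
    (ht : 0 ≤ t) (hst : c ≤ s + t)
    (hg : IntervalIntegrable (fun σ => g σ (max (c - σ) 0)) volume (max (c - t) 0) s) :
    ∫ σ in (max (c - t) 0)..s, g σ (max (c - σ) 0) =
      (∫ σ in (max (c - t) 0)..(min c s), g σ (c - σ))
        + ∫ σ in (min c s)..s, g σ (max (c - s) 0) := by
  have ham : max (c - t) 0 ≤ min c s := le_min (max_le (by linarith) hc) (max_le (by linarith) hs)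
  have hms : min c s ≤ s := min_le_right c s
  have hm : min c s ∈ uIcc (max (c - t) 0) s := mem_uIcc_of_le ham hms
  rw [← intervalIntegral.integral_add_adjacent_intervals (hg.mono_set (uIcc_subset_uIcc_left hm))
    (hg.mono_set (uIcc_subset_uIcc_right hm))]
  congr 1
  · refine intervalIntegral.integral_congr fun σ hσ => ?_
    rw [uIcc_of_le ham, mem_Icc, le_min_iff] at hσ
    simp only [max_eq_left (sub_nonneg.2 hσ.2.1)]
  · refine intervalIntegral.integral_congr fun σ hσ => ?_
    rw [uIcc_of_le hms, mem_Icc] at hσ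
    rcases le_total c s with h | h
    · rw [min_eq_left h] at hσ
      simp only [max_eq_right (sub_nonpos.2 hσ.1), max_eq_right (sub_nonpos.2 h)]
    · rw [min_eq_right h] at hσ
      rw [le_antisymm hσ.2 hσ.1]

theorem integral_add_integral_eq_cauchy_add_goursat (hc : 0 ≤ c) (hs : 0 ≤ s) (ht : 0 ≤ t)
    (hst : c ≤ s + t)
    (hP : ContinuousOn (fun p : ℝ × ℝ => P p.1 p.2) (dependenceDomain c s t))
    (hQ : ContinuousOn (fun p : ℝ × ℝ => Q p.1 p.2) (dependenceDomain c s t))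
    (hw : ContinuousOn (fun p : ℝ × ℝ => w p.1 p.2) (dependenceDomain c s t))
    (hPw : ∀ p ∈ dependenceDomain c s t, HasDerivAt (fun τ => P p.1 τ) (w p.1 p.2) p.2)
    (hQw : ∀ p ∈ dependenceDomain c s t, HasDerivAt (fun σ => Q σ p.2) (-w p.1 p.2) p.1) :
    (∫ σ in (max (c - t) 0)..s, P σ t) + ∫ τ in (max (c - s) 0)..t, Q s τ =
      (∫ σ in (max (c - t) 0)..(min c s), (P σ (c - σ) + Q σ (c - σ)))
        + (∫ σ in (min c s)..s, P σ (max (c - s) 0))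
        + ∫ τ in (min c t)..t, Q (max (c - t) 0) τ := by
  have hdiag : ∀ σ ∈ uIcc (max (c - t) 0) (min c s), (σ, c - σ) ∈ dependenceDomain c s t := by
    intro σ hσ
    rw [uIcc_of_le (le_min (max_le (by linarith) hc) (max_le (by linarith) hs)), mem_Icc,
      max_le_iff, le_min_iff] at hσ
    simp only [mem_dependenceDomain]
    refine ⟨?_, ?_, ?_, ?_, ?_⟩ <;> linarith
  have hsubst : ∫ τ in (max (c - s) 0)..(min c t), Q (c - τ) τ =
      ∫ σ in (max (c - t) 0)..(min c s), Q σ (c - σ) := by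
    have h := intervalIntegral.integral_comp_sub_left (fun σ => Q σ (c - σ)) c
      (a := max (c - s) 0) (b := min c t)
    simp only [sub_sub_cancel] at h
    rw [h, ← max_sub_sub_left, ← min_sub_sub_left, sub_self, sub_sub_cancel, sub_zero, max_comm,
      min_comm]
  rw [integral_add_integral_eq_lowerBoundary hs ht hst hP hQ hw hPw hQw,
    integral_lowerBoundary_eq_cauchy_add_goursat P hc hs ht hst
      (hP.intervalIntegrable_of_mapsTo (by fun_prop) (by fun_prop) fun _ =>
        mk_mem_dependenceDomain_bottom hs ht hst),
    integral_lowerBoundary_eq_cauchy_add_goursat (fun τ σ => Q σ τ) hc ht hs (by linarith)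
      (hQ.intervalIntegrable_of_mapsTo (by fun_prop) (by fun_prop) fun _ =>
        mk_mem_dependenceDomain_left hs ht hst),
    hsubst, intervalIntegral.integral_add
      (hP.intervalIntegrable_of_mapsTo (by fun_prop) (by fun_prop) hdiag)
      (hQ.intervalIntegrable_of_mapsTo (by fun_prop) (by fun_prop) hdiag)]
  ring

end DependenceDomain

section Hodograph

variable {lam : ℝ → ℝ} {x : ℝ → ℝ → ℝ} {V : Set (ℝ × ℝ)}

theorem mul_eq_mul_add_integral_add_integral {u v u' v' : ℝ → ℝ} {a b : ℝ}
    (hu : ∀ r ∈ uIcc a b, HasDerivAt u (u' r) r) (hv : ∀ r ∈ uIcc a b, HasDerivAt v (v' r) r)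
    (hu' : IntervalIntegrable u' volume a b) (hv' : IntervalIntegrable v' volume a b) :
    u b * v b = u a * v a + (∫ r in a..b, u' r * v r) + ∫ r in a..b, u r * v' r := by
  have h := intervalIntegral.integral_deriv_mul_eq_sub hu hv hu' hv'
  rw [intervalIntegral.integral_add
    (hu'.mul_continuousOn fun r hr => (hv r hr).continuousAt.continuousWithinAt)
    (hv'.continuousOn_mul fun r hr => (hu r hr).continuousAt.continuousWithinAt)] at h
  linarith

theorem lam_mul_eq_add_integral_pd1 (hlam : ContDiff ℝ 1 lam)
    (hx : ContDiffOn ℝ 1 (fun p : ℝ × ℝ => x p.1 p.2) V) (hV : IsOpen V) {a s t : ℝ}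
    (hseg : ∀ σ ∈ uIcc a s, (σ, t) ∈ V) :
    lam (s + t) * x s t = lam (a + t) * x a t + (∫ σ in a..s, deriv lam (σ + t) * x σ t)
      + ∫ σ in a..s, lam (σ + t) * pd1 x σ t :=
  mul_eq_mul_add_integral_add_integral (u := fun σ => lam (σ + t)) (v := fun σ => x σ t)
    (u' := fun σ => deriv lam (σ + t)) (v' := fun σ => pd1 x σ t)
    (fun σ _ => ((hlam.differentiable one_ne_zero).differentiableAt.hasDerivAt).comp_add_const σ t)
    (fun σ hσ => hasDerivAt_pd1 (p := (σ, t)) <|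
      hx.differentiableAt_of_isOpen_s6 hV one_ne_zero (hseg σ hσ))
    (((hlam.continuous_deriv le_rfl).comp (continuous_add_const t)).intervalIntegrable a s)
    ((hx.pd1 hV (m := 0) (by norm_num)).continuousOn.intervalIntegrable_of_mapsTo
      continuous_id continuous_const hseg)

theorem lam_mul_eq_add_integral_pd2 (hlam : ContDiff ℝ 1 lam)
    (hx : ContDiffOn ℝ 1 (fun p : ℝ × ℝ => x p.1 p.2) V) (hV : IsOpen V) {b s t : ℝ}
    (hseg : ∀ τ ∈ uIcc b t, (s, τ) ∈ V) :
    lam (s + t) * x s t = lam (s + b) * x s b + (∫ τ in b..t, deriv lam (s + τ) * x s τ)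
      + ∫ τ in b..t, lam (s + τ) * pd2 x s τ :=
  mul_eq_mul_add_integral_add_integral (u := fun τ => lam (s + τ)) (v := fun τ => x s τ)
    (u' := fun τ => deriv lam (s + τ)) (v' := fun τ => pd2 x s τ)
    (fun τ _ => ((hlam.differentiable one_ne_zero).differentiableAt.hasDerivAt).comp_const_add s τ)
    (fun τ hτ => hasDerivAt_pd2 (p := (s, τ)) <|
      hx.differentiableAt_of_isOpen_s6 hV one_ne_zero (hseg τ hτ))
    (((hlam.continuous_deriv le_rfl).comp (continuous_const_add s)).intervalIntegrable b t)
    ((hx.pd2 hV (m := 0) (by norm_num)).continuousOn.intervalIntegrable_of_mapsTo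
      continuous_const continuous_id hseg)

theorem hasDerivAt_lam_mul_pd1 (hlam : Differentiable ℝ lam)
    (hx : ContDiffOn ℝ 2 (fun p : ℝ × ℝ => x p.1 p.2) V) (hV : IsOpen V) {p : ℝ × ℝ}
    (hp : p ∈ V) :
    HasDerivAt (fun τ => lam (p.1 + τ) * pd1 x p.1 τ)
      (deriv lam (p.1 + p.2) * pd1 x p.1 p.2 + lam (p.1 + p.2) * pd2 (pd1 x) p.1 p.2) p.2 :=
  ((hlam _).hasDerivAt.comp_const_add p.1 p.2).mul <|
    hasDerivAt_pd2 ((hx.pd1 hV (m := 1) le_rfl).differentiableAt_of_isOpen_s6 hV one_ne_zero hp)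

theorem hasDerivAt_lam_mul_pd2 (hlam : Differentiable ℝ lam)
    (hx : ContDiffOn ℝ 2 (fun p : ℝ × ℝ => x p.1 p.2) V) (hV : IsOpen V) {p : ℝ × ℝ}
    (hp : p ∈ V) (hpde : 2 * lam (p.1 + p.2) * pd2 (pd1 x) p.1 p.2
      + deriv lam (p.1 + p.2) * (pd1 x p.1 p.2 + pd2 x p.1 p.2) = 0) :
    HasDerivAt (fun σ => lam (σ + p.2) * pd2 x σ p.2)
      (-(deriv lam (p.1 + p.2) * pd1 x p.1 p.2 + lam (p.1 + p.2) * pd2 (pd1 x) p.1 p.2)) p.1 := by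
  have h := ((hlam _).hasDerivAt.comp_add_const p.1 p.2).mul <|
    hasDerivAt_pd1 ((hx.pd2 hV (m := 1) le_rfl).differentiableAt_of_isOpen_s6 hV one_ne_zero hp)
  rw [pd1_pd2_eq_pd2_pd1 hx hV hp] at h
  exact h.congr_deriv (by linear_combination hpde)

end Hodograph

theorem unified_volterra_identity_general
    (c : ℝ) (hc : 0 < c) (lam : ℝ → ℝ) (hlam : ContDiff ℝ 1 lam)
    (x : ℝ → ℝ → ℝ) (V : Set (ℝ × ℝ)) (hV : IsOpen V)
    (hΩV : {p : ℝ × ℝ | 0 ≤ p.1 ∧ 0 ≤ p.2 ∧ c ≤ p.1 + p.2} ⊆ V)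
    (hx : ContDiffOn ℝ 2 (fun p : ℝ × ℝ => x p.1 p.2) V)
    (hpde : ∀ p ∈ V,
      2 * lam (p.1 + p.2) * pd2 (pd1 x) p.1 p.2
        + deriv lam (p.1 + p.2) * (pd1 x p.1 p.2 + pd2 x p.1 p.2) = 0) :
    ∀ s t : ℝ, 0 ≤ s → 0 ≤ t → c ≤ s + t →
      2 * lam (s + t) * x s t
      = (∫ σ in (max (c - t) 0)..s, deriv lam (σ + t) * x σ t)
        + (∫ τ in (max (c - s) 0)..t, deriv lam (s + τ) * x s τ)
        + lam (max c t) * x (max (c - t) 0) t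
        + lam (max s c) * x s (max (c - s) 0)
        + (∫ σ in (max (c - t) 0)..(min c s),
            lam c * (pd1 x σ (c - σ) + pd2 x σ (c - σ)))
        + (∫ σ in (min c s)..s, lam (σ + max (c - s) 0) * pd1 x σ (max (c - s) 0))
        + (∫ τ in (min c t)..t, lam (max (c - t) 0 + τ) * pd2 x (max (c - t) 0) τ) := by
  intro s t hs ht hst
  have hDV : dependenceDomain c s t ⊆ V := fun p hp => hΩV ⟨hp.1, hp.2.1, hp.2.2.1⟩
  have hlam' : ContinuousOn (fun p : ℝ × ℝ => lam (p.1 + p.2)) V :=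
    (hlam.continuous.comp continuous_add).continuousOn
  have hpd₁ := (hx.pd1 hV (m := 1) le_rfl).continuousOn
  have hpd₂ := (hx.pd2 hV (m := 1) le_rfl).continuousOn
  have hpd₁₂ := ((hx.pd1 hV (m := 1) le_rfl).pd2 hV (m := 0) (by norm_num)).continuousOn
  have hboundary := integral_add_integral_eq_cauchy_add_goursat
    (P := fun σ τ => lam (σ + τ) * pd1 x σ τ) (Q := fun σ τ => lam (σ + τ) * pd2 x σ τ)
    (w := fun σ τ => deriv lam (σ + τ) * pd1 x σ τ + lam (σ + τ) * pd2 (pd1 x) σ τ)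
    hc.le hs ht hst ((hlam'.mul hpd₁).mono hDV) ((hlam'.mul hpd₂).mono hDV)
    ((((hlam.continuous_deriv le_rfl).comp_continuousOn (by fun_prop)).mul hpd₁ |>.add
      (hlam'.mul hpd₁₂)).mono hDV)
    (fun p hp => hasDerivAt_lam_mul_pd1 (hlam.differentiable one_ne_zero) hx hV (hDV hp))
    (fun p hp => hasDerivAt_lam_mul_pd2 (hlam.differentiable one_ne_zero) hx hV (hDV hp)
      (hpde p (hDV hp)))
  have hcauchy : ∫ σ in (max (c - t) 0)..(min c s),
      (lam (σ + (c - σ)) * pd1 x σ (c - σ) + lam (σ + (c - σ)) * pd2 x σ (c - σ)) =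
      ∫ σ in (max (c - t) 0)..(min c s), lam c * (pd1 x σ (c - σ) + pd2 x σ (c - σ)) := by
    simp only [add_sub_cancel, mul_add]
  have htop := lam_mul_eq_add_integral_pd1 hlam (hx.of_le one_le_two) hV
    fun σ hσ => hDV (mk_mem_dependenceDomain_top hs ht hst hσ)
  have hright := lam_mul_eq_add_integral_pd2 hlam (hx.of_le one_le_two) hV
    fun τ hτ => hDV (mk_mem_dependenceDomain_right hs ht hst hτ)
  rw [← max_add_add_right, sub_add_cancel, zero_add] at htop
  rw [← max_add_add_left, add_sub_cancel, add_zero, max_comm] at hright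
  linarith

/-- The unified Volterra-type integral identity for a classical solution
of the linear hodograph equation on a neighborhood of
`Ω̄_c = {s ≥ 0, t ≥ 0, s+t ≥ c}`, valid at every point of `Ω̄_c`, where
`ξ⁺ = max(ξ,0)`. -/
theorem unified_volterra_identity
    (c : ℝ) (hc : 0 < c) (lam : ℝ → ℝ) (hlam : ContDiff ℝ 1 lam)
    (hpos : ∀ u : ℝ, 0 < u → 0 < lam u)
    (x : ℝ → ℝ → ℝ) (V : Set (ℝ × ℝ)) (hV : IsOpen V)
    (hΩV : {p : ℝ × ℝ | 0 ≤ p.1 ∧ 0 ≤ p.2 ∧ c ≤ p.1 + p.2} ⊆ V)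
    (hx : ContDiffOn ℝ 2 (fun p : ℝ × ℝ => x p.1 p.2) V)
    (hpde : ∀ p ∈ V,
      2 * lam (p.1 + p.2) * pd2 (pd1 x) p.1 p.2
        + deriv lam (p.1 + p.2) * (pd1 x p.1 p.2 + pd2 x p.1 p.2) = 0) :
    ∀ s t : ℝ, 0 ≤ s → 0 ≤ t → c ≤ s + t →
      2 * lam (s + t) * x s t
      = (∫ σ in (max (c - t) 0)..s, deriv lam (σ + t) * x σ t)
        + (∫ τ in (max (c - s) 0)..t, deriv lam (s + τ) * x s τ)
        + lam (max c t) * x (max (c - t) 0) t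
        + lam (max s c) * x s (max (c - s) 0)
        + (∫ σ in (max (c - t) 0)..(min c s),
            lam c * (pd1 x σ (c - σ) + pd2 x σ (c - σ)))
        + (∫ σ in (min c s)..s, lam (σ + max (c - s) 0) * pd1 x σ (max (c - s) 0))
        + (∫ τ in (min c t)..t, lam (max (c - t) 0 + τ) * pd2 x (max (c - t) 0) τ) :=
  unified_volterra_identity_general c hc lam hlam x V hV hΩV hx hpde
end

section
/- Let U ⊆ ℝ² be open, let λ : ℝ → ℝ be continuously differentiable, let g : U → ℝ, and let x : ℝ² → ℝ be twice continuously differentiable on U satisfying 2λ(s+t)·x_st + λ'(s+t)·(x_s + x_t) = g(s,t) on U. Then at every point of U the conservation law ∂_t(λ(s+t)·x_s(s,t)²) + ∂_s(λ(s+t)·x_t(s,t)²) + 2λ'(s+t)·x_s·x_t = g·(x_s + x_t) holds. -/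
/-!
Write `u = x_s`, `v = x_t` and `c = x_st`; since `x` is `C²`, Schwarz's theorem gives `x_ts = c`
as well. By the product rule, `∂_t(λ u²) + ∂_s(λ v²) = λ' (u² + v²) + 2 λ c (u + v)`, so the left
side of the conservation law is `(2 λ c + λ' (u + v)) (u + v)`, which is `g (u + v)` by the PDE.
-/

open Filter Topology

section Slices

variable {E : Type*} [NormedAddCommGroup E] [NormedSpace ℝ E] {G : ℝ × ℝ → E}
  {L : ℝ × ℝ →L[ℝ] E} {s t : ℝ}

theorem HasFDerivAt.hasDerivAt_slice_fst (h : HasFDerivAt G L (s, t)) :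
    HasDerivAt (fun s' => G (s', t)) (L (1, 0)) s :=
  h.comp_hasDerivAt s ((hasDerivAt_id s).prodMk (hasDerivAt_const s t))

theorem HasFDerivAt.hasDerivAt_slice_snd (h : HasFDerivAt G L (s, t)) :
    HasDerivAt (fun t' => G (s, t')) (L (0, 1)) t :=
  h.comp_hasDerivAt t ((hasDerivAt_const t s).prodMk (hasDerivAt_id t))

end Slices

section PartialDerivatives

variable {x : ℝ → ℝ → ℝ} {p : ℝ × ℝ}

theorem pd1_eq_fderiv_apply {s t : ℝ}
    (h : DifferentiableAt ℝ (fun q : ℝ × ℝ => x q.1 q.2) (s, t)) :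
    pd1 x s t = fderiv ℝ (fun q : ℝ × ℝ => x q.1 q.2) (s, t) (1, 0) :=
  h.hasFDerivAt.hasDerivAt_slice_fst.deriv

theorem pd2_eq_fderiv_apply {s t : ℝ}
    (h : DifferentiableAt ℝ (fun q : ℝ × ℝ => x q.1 q.2) (s, t)) :
    pd2 x s t = fderiv ℝ (fun q : ℝ × ℝ => x q.1 q.2) (s, t) (0, 1) :=
  h.hasFDerivAt.hasDerivAt_slice_snd.deriv

theorem ContDiffAt.exists_hasDerivAt_pd1_pd2
    (hx : ContDiffAt ℝ 2 (fun q : ℝ × ℝ => x q.1 q.2) p) :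
    ∃ c, HasDerivAt (fun t => pd1 x p.1 t) c p.2 ∧ HasDerivAt (fun s => pd2 x s p.2) c p.1 := by
  set F : ℝ × ℝ → ℝ := fun q => x q.1 q.2
  have hF : ∀ᶠ q in 𝓝 p, DifferentiableAt ℝ F q :=
    (hx.eventually (by simp)).mono fun q hq => hq.differentiableAt two_ne_zero
  have hF' : HasFDerivAt (fderiv ℝ F) (fderiv ℝ (fderiv ℝ F) p) p :=
    ((hx.fderiv_right (m := 1) le_rfl).differentiableAt one_ne_zero).hasFDerivAt
  have hpd1 : (fun t => pd1 x p.1 t) =ᶠ[𝓝 p.2] fun t => fderiv ℝ F (p.1, t) (1, 0) :=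
    ((continuous_const.prodMk continuous_id).continuousAt.eventually hF).mono
      fun t ht => pd1_eq_fderiv_apply ht
  have hpd2 : (fun s => pd2 x s p.2) =ᶠ[𝓝 p.1] fun s => fderiv ℝ F (s, p.2) (0, 1) :=
    ((continuous_id.prodMk continuous_const).continuousAt.eventually hF).mono
      fun s hs => pd2_eq_fderiv_apply hs
  refine ⟨fderiv ℝ (fderiv ℝ F) p (0, 1) (1, 0), ?_, ?_⟩
  · exact ((ContinuousLinearMap.apply ℝ ℝ ((1 : ℝ), (0 : ℝ))).hasFDerivAt.comp_hasDerivAt _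
      hF'.hasDerivAt_slice_snd).congr_of_eventuallyEq hpd1
  · rw [hx.isSymmSndFDerivAt (by simp)]
    exact ((ContinuousLinearMap.apply ℝ ℝ ((0 : ℝ), (1 : ℝ))).hasFDerivAt.comp_hasDerivAt _
      hF'.hasDerivAt_slice_fst).congr_of_eventuallyEq hpd2

end PartialDerivatives

/-- The local conservation law: if `x` is `C²` on an open set `U` and
satisfies `2λ(s+t)·x_st + λ'(s+t)·(x_s + x_t) = g(s,t)` on `U`, then
`∂_t(λ(s+t)·x_s²) + ∂_s(λ(s+t)·x_t²) + 2λ'(s+t)·x_s·x_t = g·(x_s + x_t)` on `U`. -/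
theorem energy_conservation_law
    (U : Set (ℝ × ℝ)) (hU : IsOpen U) (lam : ℝ → ℝ) (hlam : ContDiff ℝ 1 lam)
    (g : ℝ → ℝ → ℝ) (x : ℝ → ℝ → ℝ)
    (hx : ContDiffOn ℝ 2 (fun p : ℝ × ℝ => x p.1 p.2) U)
    (hpde : ∀ p ∈ U,
      2 * lam (p.1 + p.2) * pd2 (pd1 x) p.1 p.2
        + deriv lam (p.1 + p.2) * (pd1 x p.1 p.2 + pd2 x p.1 p.2) = g p.1 p.2) :
    ∀ p ∈ U,
      deriv (fun t' => lam (p.1 + t') * (pd1 x p.1 t') ^ 2) p.2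
        + deriv (fun s' => lam (s' + p.2) * (pd2 x s' p.2) ^ 2) p.1
        + 2 * deriv lam (p.1 + p.2) * pd1 x p.1 p.2 * pd2 x p.1 p.2
      = g p.1 p.2 * (pd1 x p.1 p.2 + pd2 x p.1 p.2) := by
  intro p hp
  obtain ⟨c, hst, hts⟩ := (hx.contDiffAt (hU.mem_nhds hp)).exists_hasDerivAt_pd1_pd2
  have hlam' : HasDerivAt lam (deriv lam (p.1 + p.2)) (p.1 + p.2) :=
    (hlam.differentiable one_ne_zero _).hasDerivAt
  have hdt : HasDerivAt (fun t' => lam (p.1 + t') * pd1 x p.1 t' ^ 2) _ p.2 :=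
    (hlam'.comp_const_add p.1 p.2).mul (hst.pow 2)
  have hds : HasDerivAt (fun s' => lam (s' + p.2) * pd2 x s' p.2 ^ 2) _ p.1 :=
    (hlam'.comp_add_const p.1 p.2).mul (hts.pow 2)
  have hmixed : pd2 (pd1 x) p.1 p.2 = c := hst.deriv
  rw [← hpde p hp, hmixed, hdt.deriv, hds.deriv]
  ring
end

section
/- Define x_a(s,t) = arcsin((t − s)/(t + s)) for s > 0, t > 0. Then x_a is a classical solution of the linear hodograph equation with λ(u) = u on the open first quadrant: for all s > 0, t > 0, 2(s+t)·(x_a)_st(s,t) + (x_a)_s(s,t) + (x_a)_t(s,t) = 0. -/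
/-- The "arcsine" solution `x_a(s,t) = arcsin((t − s)/(t + s))`. -/
noncomputable def xa (s t : ℝ) : ℝ := Real.arcsin ((t - s) / (t + s))

/-!
With `u = (t - s)/(t + s)` one has `1 - u² = 4st/(s + t)²`, so the chain rule through `arcsin`
gives `(x_a)_s = -√t / (√s (s + t))`; the antisymmetry `x_a(t, s) = -x_a(s, t)` then yields
`(x_a)_t = √s / (√t (s + t))`. Differentiating `(x_a)_s` in `t` gives
`(x_a)_st = (t - s) / (2 √s √t (s + t)²)`, and the three terms of the equation cancel.
-/

open Real

theorem xa_swap (s t : ℝ) : xa t s = -xa s t := by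
  rw [xa, xa, ← arcsin_neg, ← neg_div, neg_sub, add_comm]

theorem sqrt_one_sub_sq_sub_div_add {s t : ℝ} (hs : 0 < s) (ht : 0 < t) :
    √(1 - ((t - s) / (t + s)) ^ 2) = 2 * √s * √t / (t + s) := by
  have key : 1 - ((t - s) / (t + s)) ^ 2 = (2 * √s * √t / (t + s)) ^ 2 := by
    field_simp
    rw [sq_sqrt hs.le, sq_sqrt ht.le]
    ring
  rw [key, sqrt_sq (by positivity)]

theorem hasDerivAt_xa_left {s t : ℝ} (hs : 0 < s) (ht : 0 < t) :
    HasDerivAt (fun s' => xa s' t) (-√t / (√s * (s + t))) s := by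
  have hts : t + s ≠ 0 := by positivity
  have hinner : HasDerivAt (fun s' => (t - s') / (t + s')) (-2 * t / (t + s) ^ 2) s := by
    refine (((hasDerivAt_id' s).const_sub t).div ((hasDerivAt_id' s).const_add t) hts
      ).congr_deriv ?_
    field_simp
    ring
  have hlower : -1 < (t - s) / (t + s) := by rw [lt_div_iff₀ (by positivity)]; linarith
  have hupper : (t - s) / (t + s) < 1 := by rw [div_lt_one (by positivity)]; linarith
  refine ((hasDerivAt_arcsin hlower.ne' hupper.ne).comp s hinner).congr_deriv ?_
  rw [sqrt_one_sub_sq_sub_div_add hs ht]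
  have hs' : 0 < √s := sqrt_pos.mpr hs
  have ht' : 0 < √t := sqrt_pos.mpr ht
  field_simp
  linear_combination (t + s) * sq_sqrt ht.le

theorem pd1_xa {s t : ℝ} (hs : 0 < s) (ht : 0 < t) :
    pd1 xa s t = -√t / (√s * (s + t)) :=
  (hasDerivAt_xa_left hs ht).deriv

theorem pd2_xa {s t : ℝ} (hs : 0 < s) (ht : 0 < t) :
    pd2 xa s t = √s / (√t * (s + t)) := by
  have hswap : (fun t' => xa s t') = fun t' => -xa t' s := funext fun t' => xa_swap t' s
  rw [pd2, hswap, deriv.fun_neg, ← pd1, pd1_xa ht hs, neg_div, neg_neg, add_comm]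

theorem hasDerivAt_pd1_xa_right {s t : ℝ} (hs : 0 < s) (ht : 0 < t) :
    HasDerivAt (pd1 xa s) ((t - s) / (2 * √s * √t * (s + t) ^ 2)) t := by
  have hs' : 0 < √s := sqrt_pos.mpr hs
  have ht' : 0 < √t := sqrt_pos.mpr ht
  have hpd1 : pd1 xa s =ᶠ[nhds t] fun t' => -√t' / (√s * (s + t')) := by
    filter_upwards [eventually_gt_nhds ht] with t' ht'
    exact pd1_xa hs ht'
  refine (((hasDerivAt_sqrt ht.ne').neg.div (((hasDerivAt_id' t).const_add s).const_mul √s)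
    (by positivity)).congr_of_eventuallyEq hpd1).congr_deriv ?_
  simp only [Pi.neg_apply]
  field_simp
  linear_combination 2 * sq_sqrt ht.le

theorem pd2_pd1_xa {s t : ℝ} (hs : 0 < s) (ht : 0 < t) :
    pd2 (pd1 xa) s t = (t - s) / (2 * √s * √t * (s + t) ^ 2) :=
  (hasDerivAt_pd1_xa_right hs ht).deriv

/-- `x_a` is a classical solution of the linear hodograph equation
with `λ(u) = u` on the open first quadrant:
`2(s+t)·(x_a)_st + (x_a)_s + (x_a)_t = 0` for `s > 0`, `t > 0`. -/
theorem arcsine_solution :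
    ∀ s t : ℝ, 0 < s → 0 < t →
      2 * (s + t) * pd2 (pd1 xa) s t + pd1 xa s t + pd2 xa s t = 0 := by
  intro s t hs ht
  have hs' : 0 < √s := sqrt_pos.mpr hs
  have ht' : 0 < √t := sqrt_pos.mpr ht
  rw [pd2_pd1_xa hs ht, pd1_xa hs ht, pd2_xa hs ht]
  field_simp
  linear_combination sq_sqrt hs.le - sq_sqrt ht.le
end
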